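/- Let a, b, q ∈ ℝ³ with (a₁, a₂) ≠ (b₁, b₂), and suppose q ∈ W_P^{a,b} or q̂ ∈ W_P^{a,b}, where q̂ = (q₁, q₂, −q₃). Then for every t ∈ T, min(‖t − a‖, ‖t − b‖) < ‖t − q‖. (Lemma 3, second case: if the third pursuer or its mirror across T lies in the pursuer winning subspace of the pair {a, b}, then the third pursuer reaches no point of the target plane before both of the others, so the barrier depends only on the pair.) -/

import Mathlib

/-!
For `x ∈ ℝ³` put `g(x) = ‖t - x‖² - ‖x - c‖² = ‖t - c‖² - 2⟪t - c, x - c⟫`, which is affine in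
`x`. When `t` and `c` lie in the target plane, `g(x)` only depends on the horizontal coordinates
of `x`, so for a point `z` lying horizontally on the segment `[a, b]`, `g(z)` is a convex
combination of `g(a)` and `g(b)`. Hence
`‖t - z‖² = g(z) + ‖z - c‖² > min (g(a), g(b)) + ‖a - c‖² = min (‖t - a‖², ‖t - b‖²)`.
Reflecting across the target plane changes neither `‖t - q‖` nor `‖q - c‖`.
-/

noncomputable section

/-- The point of `ℝ³` with the given three coordinates. -/
def mk3 (x y z : ℝ) : EuclideanSpace ℝ (Fin 3) :=
  (WithLp.equiv 2 (Fin 3 → ℝ)).symm ![x, y, z]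

/-- The projection of a point onto the target plane `T = {z | z₃ = 0}`. -/
def projT (p : EuclideanSpace ℝ (Fin 3)) : EuclideanSpace ℝ (Fin 3) :=
  mk3 (p 0) (p 1) 0

/-- The mirror of a point across the target plane `T = {z | z₃ = 0}`. -/
def mirrorT (p : EuclideanSpace ℝ (Fin 3)) : EuclideanSpace ℝ (Fin 3) :=
  mk3 (p 0) (p 1) (-(p 2))

/-- Membership in the pursuer winning subspace `W_P^{a,b}` of the pair `{a, b}`, given the
simultaneous-arrival point `c = c_{a,b}`. -/
def memWP (a b c z : EuclideanSpace ℝ (Fin 3)) : Prop :=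
  z 2 > 0 ∧
  (∃ β : ℝ, 0 ≤ β ∧ β ≤ 1 ∧
    z 0 = β * a 0 + (1 - β) * b 0 ∧ z 1 = β * a 1 + (1 - β) * b 1) ∧
  ‖z - c‖ > ‖a - c‖

open RealInnerProductSpace

theorem min_norm_sub_lt_of_inner_eq_convex_comb {E : Type*} [NormedAddCommGroup E]
    [InnerProductSpace ℝ E] {a b c t z : E} {β : ℝ} (hβ0 : 0 ≤ β) (hβ1 : β ≤ 1)
    (hab : ‖a - c‖ = ‖b - c‖) (hz : ‖a - c‖ < ‖z - c‖)
    (hinner : ⟪t - c, z - c⟫ = β * ⟪t - c, a - c⟫ + (1 - β) * ⟪t - c, b - c⟫) :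
    min ‖t - a‖ ‖t - b‖ < ‖t - z‖ := by
  have expand (x : E) : ‖t - x‖ ^ 2 = ‖t - c‖ ^ 2 - 2 * ⟪t - c, x - c⟫ + ‖x - c‖ ^ 2 := by
    rw [← norm_sub_sq_real, sub_sub_sub_cancel_right]
  have hz2 : ‖a - c‖ ^ 2 < ‖z - c‖ ^ 2 := by gcongr
  have hβa := mul_le_mul_of_nonneg_left
    (le_max_left ⟪t - c, a - c⟫ ⟪t - c, b - c⟫) hβ0
  have hβb := mul_le_mul_of_nonneg_left
    (le_max_right ⟪t - c, a - c⟫ ⟪t - c, b - c⟫) (sub_nonneg.2 hβ1)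
  rw [min_lt_iff]
  rcases max_choice ⟪t - c, a - c⟫ ⟪t - c, b - c⟫ with hmax | hmax
  · left
    refine lt_of_pow_lt_pow_left₀ 2 (norm_nonneg _) ?_
    rw [expand a, expand z]
    linarith
  · right
    refine lt_of_pow_lt_pow_left₀ 2 (norm_nonneg _) ?_
    rw [expand b, expand z, ← hab]
    linarith

theorem inner_sub_eq_convex_comb_of_horizontal {a b c t z : EuclideanSpace ℝ (Fin 3)} {β : ℝ}
    (hc : c 2 = 0) (ht : t 2 = 0)
    (h0 : z 0 = β * a 0 + (1 - β) * b 0) (h1 : z 1 = β * a 1 + (1 - β) * b 1) :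
    ⟪t - c, z - c⟫ = β * ⟪t - c, a - c⟫ + (1 - β) * ⟪t - c, b - c⟫ := by
  simp only [PiLp.inner_apply, Fin.sum_univ_three, PiLp.sub_apply, RCLike.inner_apply,
    conj_trivial, h0, h1, hc, ht]
  ring

theorem norm_sub_mirrorT {p : EuclideanSpace ℝ (Fin 3)} (hp : p 2 = 0)
    (q : EuclideanSpace ℝ (Fin 3)) : ‖p - mirrorT q‖ = ‖p - q‖ := by
  simp [EuclideanSpace.norm_eq, Fin.sum_univ_three, mirrorT, mk3, hp]

theorem min_norm_sub_lt_of_memWP {a b c t z : EuclideanSpace ℝ (Fin 3)}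
    (hc : c 2 = 0) (hceq : ‖c - a‖ = ‖c - b‖) (ht : t 2 = 0) (hz : memWP a b c z) :
    min ‖t - a‖ ‖t - b‖ < ‖t - z‖ := by
  obtain ⟨-, ⟨β, hβ0, hβ1, h0, h1⟩, hfar⟩ := hz
  refine min_norm_sub_lt_of_inner_eq_convex_comb hβ0 hβ1 ?_ hfar
    (inner_sub_eq_convex_comb_of_horizontal hc ht h0 h1)
  rw [norm_sub_rev, hceq, norm_sub_rev]

theorem three_pursuer_pair_active_general (a b c q : EuclideanSpace ℝ (Fin 3))
    (hcT : c 2 = 0)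
    (hceq : ‖c - a‖ = ‖c - b‖)
    (hq : memWP a b c q ∨ memWP a b c (mirrorT q)) :
    ∀ t : EuclideanSpace ℝ (Fin 3), t 2 = 0 → min ‖t - a‖ ‖t - b‖ < ‖t - q‖ := by
  intro t ht
  rcases hq with hq | hq
  · exact min_norm_sub_lt_of_memWP hcT hceq ht hq
  · rw [← norm_sub_mirrorT ht q]
    exact min_norm_sub_lt_of_memWP hcT hceq ht hq

/-- Lemma 3 (second case): if the third pursuer `q` or its mirror across the target plane
lies in the pursuer winning subspace of the pair `{a, b}`, then `q` reaches no point of the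
target plane strictly before both of the others. -/
theorem three_pursuer_pair_active (a b c q : EuclideanSpace ℝ (Fin 3))
    (hab : (a 0, a 1) ≠ (b 0, b 1))
    (hcT : c 2 = 0)
    (hcline : ∃ u : ℝ, c = projT a + u • (projT b - projT a))
    (hceq : ‖c - a‖ = ‖c - b‖)
    (hq : memWP a b c q ∨ memWP a b c (mirrorT q)) :
    ∀ t : EuclideanSpace ℝ (Fin 3), t 2 = 0 → min ‖t - a‖ ‖t - b‖ < ‖t - q‖ :=
  three_pursuer_pair_active_general a b c q hcT hceq hq
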